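/- Let S be a finite state set, let γ ∈ [0,1), let G ⊊ S be a proper subset with complement Ḡ = S \ G, and for each i ∈ G let p^{(i)} ∈ ℝ^S be a stochastic vector. Call w ∈ ℝ^S feasible if w_j ≤ 1 for all j ∈ S and w_i ≤ γ Σ_{j∈S} p^{(i)}_j w_j for all i ∈ G. Define v̂ ∈ ℝ^S by v̂_j = 1 for j ∈ Ḡ and v̂_G = γ (I − γ P_{H,G})^{-1} P_{H,Ḡ} 𝟏. Then v̂ is feasible, and every feasible ŵ satisfies ŵ ≤ v̂ entrywise; consequently, every feasible ŵ ≠ v̂ satisfies Σ_{i∈S} ŵ_i < Σ_{i∈S} v̂_i, so v̂ is the unique maximizer of w ↦ Σ_{i∈S} w_i over the feasible set. -/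

import Mathlib

/-!
On `G`, `v̂` solves the discounted equation `v̂ᵢ = γ ∑ⱼ p⁽ⁱ⁾ⱼ v̂ⱼ` with boundary value `1` on `Ḡ`:
multiply `v̂_G = γ (I - γ P_{H,G})⁻¹ P_{H,Ḡ} 𝟏` by `I - γ P_{H,G}`, which is invertible because it
is strictly diagonally dominant. A discounted maximum principle finishes the proof: a function that
is at most `c ≥ 0` off `G` and satisfies `uᵢ ≤ γ ∑ⱼ p⁽ⁱ⁾ⱼ uⱼ` on `G` is at most `c` everywhere,
since at a maximum point inside `G` above `c` we would get `u ≤ γ u` with `u > 0`. Applied to `v̂`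
with `c = 1` it gives feasibility, and applied to `ŵ - v̂` with `c = 0` it gives `ŵ ≤ v̂`.
-/

open Matrix

/-- A vector `w` is feasible for the DRP if `w ≤ 1` and `w i ≤ γ ∑ j, p i j * w j`
for every `i ∈ G`. -/
def DRPFeasible {S : Type*} [Fintype S] (γ : ℝ) (G : Finset S)
    (p : S → S → ℝ) (w : S → ℝ) : Prop :=
  (∀ j, w j ≤ 1) ∧ ∀ i ∈ G, w i ≤ γ * ∑ j, p i j * w j

open Finset

theorem isUnit_det_one_sub_smul_of_substochastic {ι : Type*} [Fintype ι] [DecidableEq ι]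
    {γ : ℝ} (hγ0 : 0 ≤ γ) (hγ1 : γ < 1) {P : Matrix ι ι ℝ}
    (hPnn : ∀ i j, 0 ≤ P i j) (hPsum : ∀ i, ∑ j, P i j ≤ 1) :
    IsUnit (1 - γ • P).det := by
  refine isUnit_iff_ne_zero.mpr (det_ne_zero_of_sum_row_lt_diag fun k => ?_)
  have hoff : ∀ j ∈ univ.erase k, ‖(1 - γ • P) k j‖ = γ * P k j := fun j hj => by
    simp [Matrix.one_apply_ne' (ne_of_mem_erase hj), abs_of_nonneg hγ0, abs_of_nonneg (hPnn k j)]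
  have hPkk : P k k ≤ 1 :=
    (single_le_sum (fun j _ => hPnn k j) (mem_univ k)).trans (hPsum k)
  have hdiag : ‖(1 - γ • P) k k‖ = 1 - γ * P k k := by
    have : γ * P k k < 1 := by nlinarith [hPnn k k]
    simp [abs_of_pos (sub_pos.mpr this)]
  calc ∑ j ∈ univ.erase k, ‖(1 - γ • P) k j‖
      = γ * (∑ j, P k j - P k k) := by
        rw [sum_congr rfl hoff, ← mul_sum, sum_erase_eq_sub (mem_univ k)]
    _ < 1 - γ * P k k := by nlinarith [hPsum k]
    _ = _ := hdiag.symm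

section DiscountedMaximumPrinciple

variable {S : Type*} [Fintype S] {γ : ℝ} {G : Finset S} {p : S → S → ℝ}

theorem discounted_maximum_principle (hγ0 : 0 ≤ γ) (hγ1 : γ < 1)
    (hpnn : ∀ i ∈ G, ∀ j, 0 ≤ p i j) (hpsum : ∀ i ∈ G, ∑ j, p i j ≤ 1)
    {u : S → ℝ} {c : ℝ} (hc : 0 ≤ c) (hout : ∀ j ∉ G, u j ≤ c)
    (hin : ∀ i ∈ G, u i ≤ γ * ∑ j, p i j * u j) (j : S) : u j ≤ c := by
  by_contra! hj
  have hS : Nonempty S := ⟨j⟩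
  obtain ⟨k, hk⟩ := Finite.exists_max u
  have hck : c < u k := hj.trans_le (hk j)
  have hkG : k ∈ G := by
    by_contra hkG
    exact (hout k hkG).not_gt hck
  have hkγ : u k ≤ γ * u k := calc
    u k ≤ γ * ∑ j, p k j * u j := hin k hkG
    _ ≤ γ * ∑ j, p k j * u k := by
        gcongr with j
        · exact hpnn k hkG j
        · exact hk j
    _ = γ * (∑ j, p k j) * u k := by rw [← sum_mul, mul_assoc]
    _ ≤ γ * u k :=
        mul_le_mul_of_nonneg_right (mul_le_of_le_one_right hγ0 (hpsum k hkG)) (hc.trans hck.le)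
  nlinarith

theorem eq_discount_mul_sum_of_eq_resolvent [DecidableEq S]
    {PHG : Matrix G G ℝ} (hPHG : ∀ i j : G, PHG i j = p i j)
    {PHB : Matrix G (Gᶜ : Finset S) ℝ} (hPHB : ∀ (i : G) (j : (Gᶜ : Finset S)), PHB i j = p i j)
    (hdet : IsUnit (1 - γ • PHG).det) {v : S → ℝ} (hvout : ∀ j ∉ G, v j = 1)
    (hvin : ∀ i : G, v i = (γ • (((1 - γ • PHG)⁻¹ * PHB) *ᵥ fun _ => (1 : ℝ))) i) :
    ∀ i ∈ G, v i = γ * ∑ j, p i j * v j := by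
  set x : G → ℝ := fun i => v i
  have hx : (1 - γ • PHG) *ᵥ x = γ • (PHB *ᵥ fun _ => 1) := by
    rw [show x = _ from funext hvin, mulVec_smul, mulVec_mulVec, ← Matrix.mul_assoc,
      mul_nonsing_inv _ hdet, Matrix.one_mul]
  intro i hi
  have hxi := congrFun hx ⟨i, hi⟩
  simp only [sub_mulVec, one_mulVec, smul_mulVec, Pi.sub_apply, Pi.smul_apply, smul_eq_mul] at hxi
  have hsplit : ∑ j, p i j * v j = (PHG *ᵥ x) ⟨i, hi⟩ + (PHB *ᵥ fun _ => 1) ⟨i, hi⟩ := by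
    rw [← sum_add_sum_compl G, ← sum_coe_sort G, ← sum_coe_sort Gᶜ]
    simp only [mulVec, dotProduct, hPHG, hPHB, x]
    exact congrArg _ (sum_congr rfl fun j _ => by rw [hvout j (mem_compl.mp j.2), mul_one])
  rw [hsplit]
  linarith

theorem DRPFeasible.le_of_eq_discount_mul_sum (hγ0 : 0 ≤ γ) (hγ1 : γ < 1)
    (hpnn : ∀ i ∈ G, ∀ j, 0 ≤ p i j) (hpsum : ∀ i ∈ G, ∑ j, p i j ≤ 1) {v w : S → ℝ}
    (hw : DRPFeasible γ G p w) (hvout : ∀ j ∉ G, v j = 1)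
    (hvin : ∀ i ∈ G, v i = γ * ∑ j, p i j * v j) : w ≤ v := fun i =>
  sub_nonpos.mp <| discounted_maximum_principle (u := w - v) hγ0 hγ1 hpnn hpsum le_rfl
    (fun j hj => by simpa [hvout j hj] using hw.1 j)
    (fun i hi => by
      simp only [Pi.sub_apply, mul_sub, sum_sub_distrib]
      linarith [hw.2 i hi, hvin i hi]) i

end DiscountedMaximumPrinciple

theorem stmt_8_general {S : Type*} [Fintype S] [DecidableEq S]
    (γ : ℝ) (hγ0 : 0 ≤ γ) (hγ1 : γ < 1)
    (G : Finset S)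
    (p : S → S → ℝ)
    (hpnn : ∀ i ∈ G, ∀ j, 0 ≤ p i j) (hpsum : ∀ i ∈ G, ∑ j, p i j = 1)
    (PHG : Matrix G G ℝ) (hPHG : ∀ i j : G, PHG i j = p i j)
    (PHB : Matrix G (Gᶜ : Finset S) ℝ)
    (hPHB : ∀ (i : G) (j : (Gᶜ : Finset S)), PHB i j = p i j)
    (v : S → ℝ)
    (hvout : ∀ j ∉ G, v j = 1)
    (hvin : ∀ i : G, v i = (γ • (((1 - γ • PHG)⁻¹ * PHB) *ᵥ fun _ => (1 : ℝ))) i) :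
    DRPFeasible γ G p v ∧
      ∀ w : S → ℝ, DRPFeasible γ G p w →
        (∀ i, w i ≤ v i) ∧ (w ≠ v → ∑ i, w i < ∑ i, v i) := by
  have hpsub : ∀ i ∈ G, ∑ j, p i j ≤ 1 := fun i hi => (hpsum i hi).le
  have hPHGsum : ∀ i, ∑ j, PHG i j ≤ 1 := fun i => by
    simp only [hPHG]
    rw [sum_coe_sort G (p i)]
    exact (sum_le_univ_sum_of_nonneg (hpnn i i.2)).trans (hpsub i i.2)
  have hdet : IsUnit (1 - γ • PHG).det := isUnit_det_one_sub_smul_of_substochastic hγ0 hγ1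
    (fun i j => (hPHG i j).symm ▸ hpnn i i.2 j) hPHGsum
  have hbellman := eq_discount_mul_sum_of_eq_resolvent hPHG hPHB hdet hvout hvin
  have hv : DRPFeasible γ G p v :=
    ⟨discounted_maximum_principle hγ0 hγ1 hpnn hpsub zero_le_one (fun j hj => (hvout j hj).le)
      (fun i hi => (hbellman i hi).le), fun i hi => (hbellman i hi).le⟩
  refine ⟨hv, fun w hw => ?_⟩
  have hwv : w ≤ v := hw.le_of_eq_discount_mul_sum hγ0 hγ1 hpnn hpsub hvout hbellman
  exact ⟨hwv, fun hne => Fintype.sum_strictMono (lt_of_le_of_ne hwv hne)⟩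

/-- The vector `v̂` with `v̂ = 1` on `Ḡ` and `v̂_G = γ (I - γ P_{H,G})⁻¹ P_{H,Ḡ} 𝟏` is
feasible, dominates every feasible `ŵ` entrywise, and is the unique maximizer of the
sum of entries over the feasible set. -/
theorem stmt_8 {S : Type*} [Fintype S] [DecidableEq S]
    (γ : ℝ) (hγ0 : 0 ≤ γ) (hγ1 : γ < 1)
    (G : Finset S) (hG : G ≠ Finset.univ)
    (p : S → S → ℝ)
    (hpnn : ∀ i ∈ G, ∀ j, 0 ≤ p i j) (hpsum : ∀ i ∈ G, ∑ j, p i j = 1)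
    (PHG : Matrix G G ℝ) (hPHG : ∀ i j : G, PHG i j = p i j)
    (PHB : Matrix G (Gᶜ : Finset S) ℝ)
    (hPHB : ∀ (i : G) (j : (Gᶜ : Finset S)), PHB i j = p i j)
    (v : S → ℝ)
    (hvout : ∀ j ∉ G, v j = 1)
    (hvin : ∀ i : G, v i = (γ • (((1 - γ • PHG)⁻¹ * PHB) *ᵥ fun _ => (1 : ℝ))) i) :
    DRPFeasible γ G p v ∧
      ∀ w : S → ℝ, DRPFeasible γ G p w →
        (∀ i, w i ≤ v i) ∧ (w ≠ v → ∑ i, w i < ∑ i, v i) :=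
  stmt_8_general γ hγ0 hγ1 G p hpnn hpsum PHG hPHG PHB hPHB v hvout hvin
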